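/- Under the hypotheses of the velocity comparison theorem (v1, v2 differentiable solving v_i' = Φ(v_i, a_i(t), w_i(t); a_lo_i, a_hi_i) with a1 ≤ a2, w1 ≤ w2 pointwise, a_lo1 ≤ a_lo2, a_hi1 ≤ a_hi2, a_lo_i ≤ a_hi_i, a_lo1 + w1(t) ≤ 0 ≤ a_hi2 + w2(t) for all t, and v1(0) ≤ v2(0)), let s1(t) = σ1 + ∫₀ᵗ v1 and s2(t) = σ2 + ∫₀ᵗ v2 with σ1 ≤ σ2. Then s1(t) ≤ s2(t) for all t ≥ 0. -/

import Mathlib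

/-- The saturated acceleration function of the paper's longitudinal vehicle
model (Eq. (4)) with position-independent acceleration limits `a_lo ≤ a_hi`. -/
noncomputable def Phi (vmax alo ahi v a w : ℝ) : ℝ :=
  if (v ≤ 0 ∧ a + w ≤ 0) ∨ (vmax ≤ v ∧ 0 ≤ a + w) then 0
  else max alo (min ahi a) + w

/-!
The saturation `Φ` is not monotone in the velocity, but it is quasi-monotone: whenever vehicle 1
is at least as fast as vehicle 2, its acceleration is at most that of vehicle 2 (saturating
to `0` only ever happens in the direction that helps, thanks to `a_lo1 + w1 ≤ 0 ≤ a_hi2 + w2`).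
A Kamke-type comparison against the barriers `v2 + ε t`, whose derivative beats that of `v1`
strictly where they meet, orders the velocities; integrating orders the positions.
-/

open Set

lemma max_min_add_nonneg {lo hi a w : ℝ} (hhi : 0 ≤ hi + w) (haw : 0 ≤ a + w) :
    0 ≤ max lo (min hi a) + w := by
  have : -w ≤ max lo (min hi a) := (le_min (by linarith) (by linarith)).trans (le_max_right _ _)
  linarith

lemma max_min_add_nonpos {lo hi a w : ℝ} (hlo : lo + w ≤ 0) (haw : a + w ≤ 0) :
    max lo (min hi a) + w ≤ 0 := by
  have : max lo (min hi a) ≤ -w := max_le (by linarith) ((min_le_right _ _).trans (by linarith))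
  linarith

lemma Phi_le_Phi {vmax alo1 ahi1 alo2 ahi2 a1 a2 w1 w2 u v : ℝ}
    (hlo : alo1 ≤ alo2) (hhi : ahi1 ≤ ahi2) (ha : a1 ≤ a2) (hw : w1 ≤ w2)
    (hbrake : alo1 + w1 ≤ 0) (hengine : 0 ≤ ahi2 + w2) (hvu : v ≤ u) :
    Phi vmax alo1 ahi1 u a1 w1 ≤ Phi vmax alo2 ahi2 v a2 w2 := by
  unfold Phi
  split_ifs with hsat1 hsat2 hsat2
  · exact le_rfl
  · refine max_min_add_nonneg hengine ?_
    rcases hsat1 with ⟨hu, -⟩ | ⟨-, h⟩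
    · by_contra! h
      exact hsat2 (Or.inl ⟨hvu.trans hu, h.le⟩)
    · linarith
  · refine max_min_add_nonpos hbrake ?_
    rcases hsat2 with ⟨-, h⟩ | ⟨hv, -⟩
    · linarith
    · by_contra! h
      exact hsat1 (Or.inr ⟨hv.trans hvu, h.le⟩)
  · linarith [max_le_max hlo (min_le_min hhi ha)]

theorem image_le_of_deriv_right_le_deriv_of_ge {f f' g g' : ℝ → ℝ} {a b : ℝ}
    (hf : ContinuousOn f (Icc a b)) (hf' : ∀ x ∈ Ico a b, HasDerivWithinAt f (f' x) (Ici x) x)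
    (hg : ContinuousOn g (Icc a b)) (hg' : ∀ x ∈ Ico a b, HasDerivWithinAt g (g' x) (Ici x) x)
    (ha : f a ≤ g a) (bound : ∀ x ∈ Ico a b, g x ≤ f x → f' x ≤ g' x) :
    ∀ ⦃x⦄, x ∈ Icc a b → f x ≤ g x := by
  have fenced : ∀ ε > 0, ∀ ⦃x⦄, x ∈ Icc a b → f x ≤ g x + ε * (x - a) := by
    intro ε hε
    refine image_le_of_deriv_right_lt_deriv_boundary' (B' := fun x => g' x + ε) hf hf'
      (by simpa using ha)
      (hg.add (by fun_prop)) (fun x hx => (hg' x hx).add ?_) fun x hx hfB => ?_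
    · simpa using ((hasDerivAt_id x).sub_const a).const_mul ε |>.hasDerivWithinAt
    · have : g x ≤ f x := by nlinarith [hx.1]
      linarith [bound x hx this]
  intro x hx
  refine le_of_forall_pos_le_add fun δ hδ => ?_
  have hpos : 0 < x - a + 1 := by linarith [hx.1]
  calc f x ≤ g x + δ / (x - a + 1) * (x - a) := fenced _ (div_pos hδ hpos) hx
    _ ≤ g x + δ / (x - a + 1) * (x - a + 1) := by gcongr; linarith
    _ = g x + δ := by rw [div_mul_cancel₀ _ hpos.ne']

theorem position_comparison_general
    (vmax : ℝ)
    (alo1 ahi1 alo2 ahi2 : ℝ)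
    (hlo : alo1 ≤ alo2) (hhi : ahi1 ≤ ahi2)
    (a1 a2 w1 w2 : ℝ → ℝ)
    (ha : ∀ t, 0 ≤ t → a1 t ≤ a2 t)
    (hw : ∀ t, 0 ≤ t → w1 t ≤ w2 t)
    (hbrake : ∀ t, 0 ≤ t → alo1 + w1 t ≤ 0)
    (hengine : ∀ t, 0 ≤ t → 0 ≤ ahi2 + w2 t)
    (v1 v2 : ℝ → ℝ)
    (hv1 : ∀ t, 0 ≤ t → HasDerivAt v1 (Phi vmax alo1 ahi1 (v1 t) (a1 t) (w1 t)) t)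
    (hv2 : ∀ t, 0 ≤ t → HasDerivAt v2 (Phi vmax alo2 ahi2 (v2 t) (a2 t) (w2 t)) t)
    (hinitv : v1 0 ≤ v2 0)
    (σ1 σ2 : ℝ) (hinits : σ1 ≤ σ2) :
    ∀ t, 0 ≤ t →
      σ1 + ∫ τ in (0:ℝ)..t, v1 τ ≤ σ2 + ∫ τ in (0:ℝ)..t, v2 τ := by
  intro t ht
  have hc1 : ContinuousOn v1 (Icc 0 t) := fun x hx => (hv1 x hx.1).continuousAt.continuousWithinAt
  have hc2 : ContinuousOn v2 (Icc 0 t) := fun x hx => (hv2 x hx.1).continuousAt.continuousWithinAt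
  have hvel : ∀ x ∈ Icc 0 t, v1 x ≤ v2 x :=
    image_le_of_deriv_right_le_deriv_of_ge hc1 (fun x hx => (hv1 x hx.1).hasDerivWithinAt)
      hc2 (fun x hx => (hv2 x hx.1).hasDerivWithinAt) hinitv fun x hx hvu =>
        Phi_le_Phi hlo hhi (ha x hx.1) (hw x hx.1) (hbrake x hx.1) (hengine x hx.1) hvu
  have hint : ∫ τ in (0:ℝ)..t, v1 τ ≤ ∫ τ in (0:ℝ)..t, v2 τ :=
    intervalIntegral.integral_mono_on ht (hc1.intervalIntegrable_of_Icc ht)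
      (hc2.intervalIntegrable_of_Icc ht) hvel
  linarith

/-- **Position ordering** (position-ordering conclusion of the paper's
Theorem 1 for position-independent limits): under the hypotheses of the
velocity comparison theorem and with ordered initial positions
`σ1 ≤ σ2`, the positions `s_i(t) = σ_i + ∫₀ᵗ v_i` stay ordered. -/
theorem position_comparison
    (vmax : ℝ) (hvmax : 0 < vmax)
    (alo1 ahi1 alo2 ahi2 : ℝ)
    (h1 : alo1 ≤ ahi1) (h2 : alo2 ≤ ahi2)
    (hlo : alo1 ≤ alo2) (hhi : ahi1 ≤ ahi2)
    (a1 a2 w1 w2 : ℝ → ℝ)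
    (ha : ∀ t, 0 ≤ t → a1 t ≤ a2 t)
    (hw : ∀ t, 0 ≤ t → w1 t ≤ w2 t)
    (hbrake : ∀ t, 0 ≤ t → alo1 + w1 t ≤ 0)
    (hengine : ∀ t, 0 ≤ t → 0 ≤ ahi2 + w2 t)
    (v1 v2 : ℝ → ℝ)
    (hv1 : ∀ t, 0 ≤ t → HasDerivAt v1 (Phi vmax alo1 ahi1 (v1 t) (a1 t) (w1 t)) t)
    (hv2 : ∀ t, 0 ≤ t → HasDerivAt v2 (Phi vmax alo2 ahi2 (v2 t) (a2 t) (w2 t)) t)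
    (hinitv : v1 0 ≤ v2 0)
    (σ1 σ2 : ℝ) (hinits : σ1 ≤ σ2) :
    ∀ t, 0 ≤ t →
      σ1 + ∫ τ in (0:ℝ)..t, v1 τ ≤ σ2 + ∫ τ in (0:ℝ)..t, v2 τ :=
  position_comparison_general vmax alo1 ahi1 alo2 ahi2 hlo hhi a1 a2 w1 w2 ha hw hbrake hengine v1
    v2 hv1 hv2 hinitv σ1 σ2 hinits
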